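/- arXiv:2412.08814 — 2 statements merged into one kernel-verified Lean document; each statement's English description precedes it below -/
import Mathlib

section
/- Let d ≥ 1, let J : ℤ^d → [0,∞) satisfy J(0) = 0 and J(−y) = J(y), let R ≥ 1 be an integer, and let β ≥ 0. Define the periodised kernel J̄_R(y) = ∑_{u∈ℤ^d} J(y + Ru) for y ∈ 𝕋_R^d. Then for every x ∈ 𝕋_R^d, the torus self-avoiding-walk two-point function satisfies G_{R,β}(x) ≤ Γ_{R,β}(x), where Γ_{R,β}(x) = ∑_{x'∈ℤ^d : π(x')=x} G_β(x') and G_β, G_{R,β} are the self-avoiding-walk two-point functions on ℤ^d and 𝕋_R^d respectively, with all quantities valued in [0,∞]. -/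
open scoped ENNReal NNReal BigOperators

/-- The natural projection `π : ℤ^d → 𝕋_R^d = (ℤ/Rℤ)^d`. -/
def torusProj {d : ℕ} (R : ℕ) (x : Fin d → ℤ) : Fin d → ZMod R :=
  fun i => (x i : ZMod R)

/-- The self-avoiding-walk two-point function with kernel `J` and activity `β`,
on an abelian group `V` (say `ℤ^d` or the torus `𝕋_R^d`):
`G_β(x) = ∑_{n≥0} β^n ∑_{ω : n-step SAW 0 → x} ∏_{i=1}^n J(ω(i)-ω(i-1))`,
with values in `[0,∞]`. -/
noncomputable def sawTwoPoint {V : Type*} [AddCommGroup V] (J : V → ℝ≥0∞) (β : ℝ≥0)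
    (x : V) : ℝ≥0∞ :=
  ∑' n : ℕ, (β : ℝ≥0∞) ^ n *
    ∑' ω : {ω : Fin (n + 1) → V //
        ω 0 = 0 ∧ ω (Fin.last n) = x ∧ Function.Injective ω},
      ∏ i : Fin n, J (ω.1 i.succ - ω.1 i.castSucc)

/-!
Lift each step of a torus walk `ω` to one of its preimages `z_i ∈ ℤ^d` and let `σ` be the walk with
steps `z_i`. Then `π ∘ σ = ω`, so `σ` is self-avoiding whenever `ω` is, and `σ` ends in the fibre
over `x`. Expanding the periodised weight `∏ J̄_R(ω(i) - ω(i-1)) = ∏ ∑_{z_i} J(z_i)`, the `n`-step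
part of the torus two-point function becomes a sum over pairs (torus walk, lifts of its steps),
which embeds weight-preservingly into the self-avoiding walks of `ℤ^d` ending over `x`: the lift
`σ` determines both `ω = π ∘ σ` and its own steps.
-/

theorem ENNReal.prod_tsum_eq_tsum_pi {n : ℕ} {T : Fin n → Type*} (f : ∀ i, T i → ℝ≥0∞) :
    ∏ i, ∑' a, f i a = ∑' g : ∀ i, T i, ∏ i, f i (g i) := by
  induction n with
  | zero => simp
  | succ n ih =>
    rw [Fin.prod_univ_succ, ih, ← (Fin.consEquiv T).tsum_eq, ENNReal.tsum_prod',
      ← ENNReal.tsum_mul_right]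
    refine tsum_congr fun a => ?_
    rw [← ENNReal.tsum_mul_left]
    refine tsum_congr fun g => ?_
    simp [Fin.prod_univ_succ, Fin.consEquiv]

theorem Fin.partialSum_succ_sub_castSucc {M : Type*} [AddCommGroup M] {n : ℕ} (f : Fin n → M)
    (i : Fin n) : partialSum f i.succ - partialSum f i.castSucc = f i := by
  rw [partialSum_succ, add_sub_cancel_left]

abbrev SelfAvoidingWalk (V : Type*) [AddCommGroup V] (n : ℕ) (x : V) : Type _ :=
  {ω : Fin (n + 1) → V // ω 0 = 0 ∧ ω (Fin.last n) = x ∧ Function.Injective ω}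

section Lifting

variable {W V : Type*} [AddCommGroup W] [AddCommGroup V] (π : W →+ V) {n : ℕ}

theorem AddMonoidHom.map_partialSum_of_map_eq_steps {ω : Fin (n + 1) → V} (hω : ω 0 = 0)
    {z : Fin n → W} (hz : ∀ i, π (z i) = ω i.succ - ω i.castSucc) (k : Fin (n + 1)) :
    π (Fin.partialSum z k) = ω k := by
  induction k using Fin.induction with
  | zero => simp [hω]
  | succ i ih => rw [Fin.partialSum_succ, map_add, ih, hz, add_sub_cancel]

def liftSAW {x : V}
    (p : Σ ω : SelfAvoidingWalk V n x,
      ∀ i : Fin n, {z : W // π z = ω.1 i.succ - ω.1 i.castSucc}) :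
    Σ x' : {x' : W // π x' = x}, SelfAvoidingWalk W n x'.1 :=
  have hproj := π.map_partialSum_of_map_eq_steps p.1.2.1 fun i => (p.2 i).2
  ⟨⟨_, (hproj _).trans p.1.2.2.1⟩,
    ⟨Fin.partialSum fun i => (p.2 i).1, Fin.partialSum_zero _, rfl,
      fun a b hab => p.1.2.2.2 <| by rw [← hproj a, ← hproj b, hab]⟩⟩

theorem liftSAW_injective (x : V) : Function.Injective (liftSAW π (n := n) (x := x)) := by
  rintro ⟨ω, z⟩ ⟨ω', z'⟩ h
  have hσ : Fin.partialSum (fun i => (z i).1) = Fin.partialSum (fun i => (z' i).1) :=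
    congrArg (fun q => q.2.1) h
  obtain rfl : ω = ω' := Subtype.ext <| funext fun k => by
    rw [← π.map_partialSum_of_map_eq_steps ω.2.1 (fun i => (z i).2) k,
      ← π.map_partialSum_of_map_eq_steps ω'.2.1 (fun i => (z' i).2) k, hσ]
  obtain rfl : z = z' := funext fun i => Subtype.ext <| by
    simpa only [Fin.partialSum_succ_sub_castSucc] using
      congrArg (fun σ => σ i.succ - σ i.castSucc) hσ
  rfl

theorem tsum_saw_prod_tsum_fibre_le (J : W → ℝ≥0∞) (n : ℕ) (x : V) :
    ∑' ω : SelfAvoidingWalk V n x,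
        ∏ i : Fin n, ∑' z : {z : W // π z = ω.1 i.succ - ω.1 i.castSucc}, J z ≤
      ∑' x' : {x' : W // π x' = x}, ∑' σ : SelfAvoidingWalk W n x'.1,
        ∏ i : Fin n, J (σ.1 i.succ - σ.1 i.castSucc) := by
  calc
    _ = ∑' p : Σ ω : SelfAvoidingWalk V n x,
            ∀ i : Fin n, {z : W // π z = ω.1 i.succ - ω.1 i.castSucc}, ∏ i, J (p.2 i) := by
      rw [ENNReal.tsum_sigma']
      exact tsum_congr fun ω => ENNReal.prod_tsum_eq_tsum_pi _
    _ = ∑' p, ∏ i : Fin n, J ((liftSAW π p).2.1 i.succ - (liftSAW π p).2.1 i.castSucc) := by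
      simp only [liftSAW, Fin.partialSum_succ_sub_castSucc]
    _ ≤ ∑' q : Σ x' : {x' : W // π x' = x}, SelfAvoidingWalk W n x'.1,
          ∏ i : Fin n, J (q.2.1 i.succ - q.2.1 i.castSucc) :=
      ENNReal.tsum_comp_le_tsum_of_injective (liftSAW_injective π x) _
    _ = _ := ENNReal.tsum_sigma' _

theorem sawTwoPoint_pushforward_le (J : W → ℝ≥0∞) (β : ℝ≥0) (x : V) :
    sawTwoPoint (fun y => ∑' z : {z : W // π z = y}, J z) β x ≤
      ∑' x' : {x' : W // π x' = x}, sawTwoPoint J β x' := by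
  calc
    _ ≤ ∑' n : ℕ, (β : ℝ≥0∞) ^ n * ∑' x' : {x' : W // π x' = x},
          ∑' σ : SelfAvoidingWalk W n x'.1, ∏ i : Fin n, J (σ.1 i.succ - σ.1 i.castSucc) :=
      ENNReal.tsum_le_tsum fun n => by gcongr; exact tsum_saw_prod_tsum_fibre_le π J n x
    _ = _ := by
      simp only [sawTwoPoint, ← ENNReal.tsum_mul_left]
      exact ENNReal.tsum_comm

end Lifting

theorem torus_saw_le_unwrapped_general (d R : ℕ) (J : (Fin d → ℤ) → ℝ≥0) (β : ℝ≥0)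
    (x : Fin d → ZMod R) :
    sawTwoPoint
        (fun y : Fin d → ZMod R =>
          ∑' z : {z : Fin d → ℤ // torusProj R z = y}, (J z.1 : ℝ≥0∞)) β x ≤
      ∑' x' : {x' : Fin d → ℤ // torusProj R x' = x},
        sawTwoPoint (fun z : Fin d → ℤ => (J z : ℝ≥0∞)) β x'.1 :=
  sawTwoPoint_pushforward_le ((Int.castAddHom (ZMod R)).compLeft (Fin d)) (fun z => J z) β x

/-- The torus SAW two-point function, defined with the periodised kernel
`J̄_R(y) = ∑_{z : π(z)=y} J(z) = ∑_u J(y+Ru)`, is bounded above by the unwrapped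
two-point function `Γ_{R,β}(x) = ∑_{x' : π(x')=x} G_β(x')`. -/
theorem torus_saw_le_unwrapped (d R : ℕ) (hd : 1 ≤ d) (hR : 1 ≤ R)
    (J : (Fin d → ℤ) → ℝ≥0) (hJ0 : J 0 = 0) (hJsym : ∀ y, J (-y) = J y)
    (β : ℝ≥0) (x : Fin d → ZMod R) :
    sawTwoPoint
        (fun y : Fin d → ZMod R =>
          ∑' z : {z : Fin d → ℤ // torusProj R z = y}, (J z.1 : ℝ≥0∞)) β x ≤
      ∑' x' : {x' : Fin d → ℤ // torusProj R x' = x},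
        sawTwoPoint (fun z : Fin d → ℤ => (J z : ℝ≥0∞)) β x'.1 :=
  torus_saw_le_unwrapped_general d R J β x
end

section
/- Let d ≥ 1, let J : ℤ^d → [0,∞) satisfy J(0) = 0 and J(−y) = J(y), let R ≥ 1 be an integer, and let β ≥ 0. Then for every x ∈ 𝕋_R^d, the difference between the unwrapped and torus self-avoiding-walk two-point functions satisfies (in [0,∞]): Γ_{R,β}(x) − G_{R,β}(x) ≤ ∑_{y∈ℤ^d} G_β(y) · ∑_{y'∈ℤ^d : y' ≠ y, π(y')=π(y)} G_β(y'−y) · ∑_{x'∈ℤ^d : π(x')=x} G_β(x'−y'), where Γ_{R,β}(x) = ∑_{x'∈ℤ^d : π(x')=x} G_β(x'). -/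
open scoped ENNReal NNReal BigOperators

set_option linter.unusedSectionVars false

namespace UnwrapAux

open Finset

variable {V : Type*} [AddCommGroup V]

abbrev Walk (n : ℕ) (x : V) :=
  {ω : Fin (n + 1) → V // ω 0 = 0 ∧ ω (Fin.last n) = x ∧ Function.Injective ω}

noncomputable def wt (J : V → ℝ≥0∞) (β : ℝ≥0) (n : ℕ) (ω : Fin (n + 1) → V) : ℝ≥0∞ :=
  (β : ℝ≥0∞) ^ n * ∏ i : Fin n, J (ω i.succ - ω i.castSucc)

lemma saw_eq (J : V → ℝ≥0∞) (β : ℝ≥0) (x : V) :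
    sawTwoPoint J β x = ∑' q : Σ n, Walk n x, wt J β q.1 q.2.1 := by
  rw [sawTwoPoint, ENNReal.tsum_sigma' (fun q : Σ n, Walk n x => wt J β q.1 q.2.1)]
  exact tsum_congr fun n => (ENNReal.tsum_mul_left).symm

def ext {n : ℕ} (ω : Fin (n + 1) → V) : ℕ → V :=
  fun k => ω ⟨min k n, Nat.lt_succ_of_le (min_le_right k n)⟩

lemma ext_eq {n : ℕ} (ω : Fin (n + 1) → V) {k : ℕ} (hk : k ≤ n) :
    ext ω k = ω ⟨k, Nat.lt_succ_of_le hk⟩ := by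
  simp [ext, Nat.min_eq_left hk]

lemma ext_apply_fin {n : ℕ} (ω : Fin (n + 1) → V) (i : Fin (n + 1)) :
    ext ω i.val = ω i := by
  rw [ext_eq ω (Nat.lt_succ_iff.mp i.isLt)]

lemma ext_of_le {n : ℕ} (ω : Fin (n + 1) → V) {k : ℕ} (hk : n ≤ k) :
    ext ω k = ext ω n := by
  simp [ext, Nat.min_eq_right hk]

lemma wt_eq (J : V → ℝ≥0∞) (β : ℝ≥0) {n : ℕ} (ω : Fin (n + 1) → V) :
    wt J β n ω = (β : ℝ≥0∞) ^ n * ∏ i ∈ range n, J (ext ω (i + 1) - ext ω i) := by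
  rw [wt, ← Fin.prod_univ_eq_prod_range (fun i => J (ext ω (i + 1) - ext ω i)) n]
  congr 1
  refine Finset.prod_congr rfl fun i _ => ?_
  congr 1
  rw [ext_eq ω (Nat.succ_le_of_lt i.isLt), ext_eq ω (le_of_lt i.isLt)]
  rfl

/-- The segment of a walk starting at time `a`, of length `m`, shifted to start at `0`. -/
def seg {n : ℕ} (ω : Fin (n + 1) → V) (a m : ℕ) : Fin (m + 1) → V :=
  fun i => ext ω (a + i.val) - ext ω a

lemma seg_zero {n : ℕ} (ω : Fin (n + 1) → V) (a m : ℕ) : seg ω a m 0 = 0 := by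
  simp [seg]

lemma seg_last {n : ℕ} (ω : Fin (n + 1) → V) (a m : ℕ) :
    seg ω a m (Fin.last m) = ext ω (a + m) - ext ω a := rfl

lemma seg_inj {n : ℕ} {ω : Fin (n + 1) → V} (hinj : Function.Injective ω)
    {a m : ℕ} (h : a + m ≤ n) : Function.Injective (seg ω a m) := by
  intro i j hij
  have h1 : ext ω (a + i.val) = ext ω (a + j.val) := by
    have := sub_left_inj.mp hij
    exact this
  rw [ext_eq ω (by omega : a + i.val ≤ n), ext_eq ω (by omega : a + j.val ≤ n)] at h1
  have := hinj h1
  have : a + i.val = a + j.val := congrArg Fin.val this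
  exact Fin.ext (by omega)

lemma seg_steps {n : ℕ} (ω : Fin (n + 1) → V) (a m : ℕ) (i : Fin m) :
    seg ω a m i.succ - seg ω a m i.castSucc = ext ω (a + i.val + 1) - ext ω (a + i.val) := by
  show (ext ω (a + (i.val + 1)) - ext ω a) - (ext ω (a + i.val) - ext ω a) = _
  rw [sub_sub_sub_cancel_right, Nat.add_assoc]

lemma wt_seg (J : V → ℝ≥0∞) (β : ℝ≥0) {n : ℕ} (ω : Fin (n + 1) → V) (a m : ℕ) :
    wt J β m (seg ω a m) =
      (β : ℝ≥0∞) ^ m * ∏ i ∈ range m, J (ext ω (a + i + 1) - ext ω (a + i)) := by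
  rw [wt, ← Fin.prod_univ_eq_prod_range (fun i => J (ext ω (a + i + 1) - ext ω (a + i))) m]
  congr 1
  exact Finset.prod_congr rfl fun i _ => by rw [seg_steps]

lemma prod_range_split (g : ℕ → ℝ≥0∞) {a b n : ℕ} (hab : a ≤ b) (hbn : b ≤ n) :
    ∏ i ∈ range n, g i =
      (∏ i ∈ range a, g i) *
        ((∏ i ∈ range (b - a), g (a + i)) * ∏ i ∈ range (n - b), g (b + i)) := by
  obtain ⟨u, rfl⟩ : ∃ u, b = a + u := ⟨b - a, by omega⟩
  obtain ⟨v, rfl⟩ : ∃ v, n = a + u + v := ⟨n - (a + u), by omega⟩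
  rw [Nat.add_sub_cancel_left, show a + u + v - (a + u) = v by omega, Nat.add_assoc,
    Finset.prod_range_add g a (u + v), Finset.prod_range_add (fun i => g (a + i)) u v]
  exact congrArg _ (congrArg _ (Finset.prod_congr rfl fun i _ => congrArg g (by omega)))

lemma wt_split (J : V → ℝ≥0∞) (β : ℝ≥0) {n : ℕ} (ω : Fin (n + 1) → V) {a b : ℕ}
    (hab : a ≤ b) (hbn : b ≤ n) :
    wt J β n ω =
      wt J β a (seg ω 0 a) *
        (wt J β (b - a) (seg ω a (b - a)) * wt J β (n - b) (seg ω b (n - b))) := by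
  rw [wt_eq, wt_seg, wt_seg, wt_seg]
  simp only [Nat.zero_add]
  have hb : (β : ℝ≥0∞) ^ n = β ^ a * ((β : ℝ≥0∞) ^ (b - a) * β ^ (n - b)) := by
    rw [← pow_add, ← pow_add]; congr 1; omega
  have hkey : ∏ i ∈ range n, J (ext ω (i + 1) - ext ω i) =
      (∏ i ∈ range a, J (ext ω (i + 1) - ext ω i)) *
        ((∏ i ∈ range (b - a), J (ext ω (a + i + 1) - ext ω (a + i))) *
          ∏ i ∈ range (n - b), J (ext ω (b + i + 1) - ext ω (b + i))) :=
    prod_range_split (fun k => J (ext ω (k + 1) - ext ω k)) hab hbn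
  rw [hkey, hb]
  ring

/-- Walks with the same initial point and the same steps agree. -/
lemma walk_eq_of_steps {n : ℕ} {ω ω' : Fin (n + 1) → V} (h0 : ω 0 = ω' 0)
    (h : ∀ i : Fin n, ω i.succ - ω i.castSucc = ω' i.succ - ω' i.castSucc) : ω = ω' := by
  funext i
  induction i using Fin.induction with
  | zero => exact h0
  | succ i ih =>
      have h2 := h i
      rw [ih] at h2
      exact sub_left_inj.mp h2

lemma tsum_mul_tsum {α β' : Type*} (f : α → ℝ≥0∞) (g : β' → ℝ≥0∞) :
    (∑' a, f a) * ∑' b, g b = ∑' p : α × β', f p.1 * g p.2 := by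
  rw [ENNReal.tsum_prod']
  simp_rw [ENNReal.tsum_mul_left]
  rw [ENNReal.tsum_mul_right]

/-- Product of tsums over a finite index is a tsum over the pi type. -/
lemma prod_tsum {n : ℕ} (γ : Fin n → Type*) (f : ∀ i, γ i → ℝ≥0∞) :
    ∏ i, ∑' z : γ i, f i z = ∑' z : (∀ i, γ i), ∏ i, f i (z i) := by
  induction n with
  | zero =>
      haveI : Unique (∀ i : Fin 0, γ i) := ⟨⟨fun i => i.elim0⟩, fun a => funext fun i => i.elim0⟩
      rw [tsum_eq_single (default : ∀ i : Fin 0, γ i)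
        (fun b hb => absurd (Subsingleton.elim b default) hb)]
      simp
  | succ n ih =>
      rw [Fin.prod_univ_succ, ih (fun i => γ i.succ) (fun i => f i.succ), tsum_mul_tsum,
        ← Equiv.tsum_eq (Fin.consEquiv γ) (fun z => ∏ i, f i (z i))]
      exact tsum_congr fun p => by
        simp [Fin.consEquiv, Fin.prod_univ_succ]


section Proj

variable {d : ℕ} (R : ℕ)

lemma torusProj_zero : torusProj (d := d) R 0 = 0 := funext fun i => by simp [torusProj]

lemma torusProj_sub (a b : Fin d → ℤ) :
    torusProj R (a - b) = torusProj R a - torusProj R b :=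
  funext fun i => by simp [torusProj]

end Proj

section Main

variable (d R : ℕ) (J : (Fin d → ℤ) → ℝ≥0∞) (β : ℝ≥0) (x : Fin d → ZMod R)

/-- Index of all `ℤ^d` SAWs started at `0` ending at some lift of `x`. -/
abbrev GIdx : Type :=
  Σ n : ℕ, {ω : Fin (n + 1) → Fin d → ℤ //
    ω 0 = 0 ∧ torusProj R (ω (Fin.last n)) = x ∧ Function.Injective ω}

def gEquiv : (Σ x' : {x' : Fin d → ℤ // torusProj R x' = x}, Σ n : ℕ, Walk n x'.1) ≃
    GIdx d R x where
  toFun r := ⟨r.2.1, ⟨r.2.2.1, r.2.2.2.1,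
    by rw [r.2.2.2.2.1]; exact r.1.2, r.2.2.2.2.2⟩⟩
  invFun q := ⟨⟨q.2.1 (Fin.last q.1), q.2.2.2.1⟩, ⟨q.1, ⟨q.2.1, q.2.2.1, rfl, q.2.2.2.2⟩⟩⟩
  left_inv := by
    rintro ⟨⟨x', hx'⟩, n, ω, h0, hl, hinj⟩
    obtain rfl : x' = ω (Fin.last n) := hl.symm
    rfl
  right_inv := by rintro ⟨n, ω, h0, hl, hinj⟩; rfl

lemma gamma_eq :
    (∑' x' : {x' : Fin d → ℤ // torusProj R x' = x}, sawTwoPoint J β x'.1) =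
      ∑' q : GIdx d R x, wt J β q.1 q.2.1 := by
  calc (∑' x' : {x' : Fin d → ℤ // torusProj R x' = x}, sawTwoPoint J β x'.1)
      = ∑' x' : {x' : Fin d → ℤ // torusProj R x' = x}, ∑' q : Σ n : ℕ, Walk n x'.1,
          wt J β q.1 q.2.1 := tsum_congr fun x' => saw_eq J β x'.1
    _ = ∑' r : Σ x' : {x' : Fin d → ℤ // torusProj R x' = x}, Σ n : ℕ, Walk n x'.1,
          wt J β r.2.1 r.2.2.1 :=
        (ENNReal.tsum_sigma' (fun r : Σ x' : {x' : Fin d → ℤ // torusProj R x' = x},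
          Σ n : ℕ, Walk n x'.1 => wt J β r.2.1 r.2.2.1)).symm
    _ = ∑' q : GIdx d R x, wt J β q.1 q.2.1 :=
        Equiv.tsum_eq (gEquiv d R x) (fun q : GIdx d R x => wt J β q.1 q.2.1)

/-- Index for the torus two-point function: a torus SAW together with lifts of
all of its steps. -/
abbrev TIdx : Type :=
  Σ n : ℕ, Σ wb : {ω : Fin (n + 1) → Fin d → ZMod R //
      ω 0 = 0 ∧ ω (Fin.last n) = x ∧ Function.Injective ω},
    ∀ i : Fin n, {z : Fin d → ℤ // torusProj R z = wb.1 i.succ - wb.1 i.castSucc}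

noncomputable def TWt : TIdx d R x → ℝ≥0∞ := fun q =>
  (β : ℝ≥0∞) ^ q.1 * ∏ i : Fin q.1, J ((q.2.2 i).1)

lemma torus_eq :
    sawTwoPoint (fun y : Fin d → ZMod R =>
        ∑' z : {z : Fin d → ℤ // torusProj R z = y}, J z.1) β x =
      ∑' q : TIdx d R x, TWt d R J β x q := by
  calc sawTwoPoint (fun y : Fin d → ZMod R =>
        ∑' z : {z : Fin d → ℤ // torusProj R z = y}, J z.1) β x
      = ∑' n : ℕ, (β : ℝ≥0∞) ^ n *
          ∑' wb : {ω : Fin (n + 1) → Fin d → ZMod R //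
              ω 0 = 0 ∧ ω (Fin.last n) = x ∧ Function.Injective ω},
            ∏ i : Fin n, ∑' z : {z : Fin d → ℤ //
                torusProj R z = wb.1 i.succ - wb.1 i.castSucc}, J z.1 := rfl
    _ = ∑' n : ℕ, (β : ℝ≥0∞) ^ n *
          ∑' wb : {ω : Fin (n + 1) → Fin d → ZMod R //
              ω 0 = 0 ∧ ω (Fin.last n) = x ∧ Function.Injective ω},
            ∑' zf : (∀ i : Fin n, {z : Fin d → ℤ //
                torusProj R z = wb.1 i.succ - wb.1 i.castSucc}),
              ∏ i : Fin n, J ((zf i).1) := by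
        exact tsum_congr fun n => congrArg _ (tsum_congr fun wb => prod_tsum _ _)
    _ = ∑' n : ℕ, ∑' wb : {ω : Fin (n + 1) → Fin d → ZMod R //
              ω 0 = 0 ∧ ω (Fin.last n) = x ∧ Function.Injective ω},
          ∑' zf : (∀ i : Fin n, {z : Fin d → ℤ //
              torusProj R z = wb.1 i.succ - wb.1 i.castSucc}),
            (β : ℝ≥0∞) ^ n * ∏ i : Fin n, J ((zf i).1) := by
        refine tsum_congr fun n => ?_
        rw [← ENNReal.tsum_mul_left]
        exact tsum_congr fun wb => (ENNReal.tsum_mul_left).symm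
    _ = ∑' q : TIdx d R x, TWt d R J β x q := by
        rw [ENNReal.tsum_sigma' (fun q : TIdx d R x => TWt d R J β x q)]
        exact tsum_congr fun n =>
          (ENNReal.tsum_sigma' (fun b : Σ wb : {ω : Fin (n + 1) → Fin d → ZMod R //
              ω 0 = 0 ∧ ω (Fin.last n) = x ∧ Function.Injective ω},
            (∀ i : Fin n, {z : Fin d → ℤ //
              torusProj R z = wb.1 i.succ - wb.1 i.castSucc}) =>
            TWt d R J β x ⟨n, b⟩)).symm

/-- Walks whose torus projection is injective, mapped to torus-walk data. -/
def goodMap (q : {q : GIdx d R x // Function.Injective (torusProj R ∘ q.2.1)}) :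
    TIdx d R x :=
  ⟨q.1.1, ⟨⟨torusProj R ∘ q.1.2.1,
      by show torusProj R (q.1.2.1 0) = 0; rw [q.1.2.2.1, torusProj_zero],
      q.1.2.2.2.1, q.2⟩,
    fun i => ⟨q.1.2.1 i.succ - q.1.2.1 i.castSucc, torusProj_sub R _ _⟩⟩⟩

lemma goodMap_wt (q : {q : GIdx d R x // Function.Injective (torusProj R ∘ q.2.1)}) :
    TWt d R J β x (goodMap d R x q) = wt J β q.1.1 q.1.2.1 := rfl

lemma goodMap_inj : Function.Injective (goodMap d R x) := by
  rintro ⟨⟨n1, ω1, hω1⟩, hg1⟩ ⟨⟨n2, ω2, hω2⟩, hg2⟩ h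
  have hn : n1 = n2 := congrArg Sigma.fst h
  subst hn
  have hb := eq_of_heq (Sigma.mk.inj_iff.mp h).2
  have hsteps := congrArg
    (fun b : Σ wb : {ω : Fin (n1 + 1) → Fin d → ZMod R //
        ω 0 = 0 ∧ ω (Fin.last n1) = x ∧ Function.Injective ω},
      (∀ i : Fin n1, {z : Fin d → ℤ //
        torusProj R z = wb.1 i.succ - wb.1 i.castSucc}) =>
      (fun i : Fin n1 => (b.2 i).1)) hb
  have hω : ω1 = ω2 :=
    walk_eq_of_steps (hω1.1.trans hω2.1.symm) (fun i => congrFun hsteps i)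
  subst hω
  rfl

lemma good_le :
    (∑' q : {q : GIdx d R x // Function.Injective (torusProj R ∘ q.2.1)},
        wt J β q.1.1 q.1.2.1) ≤
      sawTwoPoint (fun y : Fin d → ZMod R =>
        ∑' z : {z : Fin d → ℤ // torusProj R z = y}, J z.1) β x := by
  rw [torus_eq]
  have h1 : (∑' q : {q : GIdx d R x // Function.Injective (torusProj R ∘ q.2.1)},
      wt J β q.1.1 q.1.2.1) =
      ∑' q : {q : GIdx d R x // Function.Injective (torusProj R ∘ q.2.1)},
        TWt d R J β x (goodMap d R x q) :=
    tsum_congr fun q => (goodMap_wt d R J β x q).symm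
  rw [h1]
  exact ENNReal.tsum_comp_le_tsum_of_injective (goodMap_inj d R x) _

/-- Index type for the diagrammatic upper bound. -/
abbrev RIdx : Type :=
  Σ y : Fin d → ℤ,
    Σ y' : {y' : Fin d → ℤ // y' ≠ y ∧ torusProj R y' = torusProj R y},
      Σ x' : {x' : Fin d → ℤ // torusProj R x' = x},
        (Σ n : ℕ, Walk n y) ×
          ((Σ n : ℕ, Walk n (y'.1 - y)) × (Σ n : ℕ, Walk n (x'.1 - y'.1)))

noncomputable def RWt : RIdx d R x → ℝ≥0∞ := fun r =>
  wt J β r.2.2.2.1.1 r.2.2.2.1.2.1 *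
    (wt J β r.2.2.2.2.1.1 r.2.2.2.2.1.2.1 * wt J β r.2.2.2.2.2.1 r.2.2.2.2.2.2.1)

lemma rhs_eq :
    (∑' y : Fin d → ℤ,
      sawTwoPoint J β y *
        ∑' y' : {y' : Fin d → ℤ // y' ≠ y ∧ torusProj R y' = torusProj R y},
          sawTwoPoint J β (y'.1 - y) *
            ∑' x' : {x' : Fin d → ℤ // torusProj R x' = x},
              sawTwoPoint J β (x'.1 - y'.1)) = ∑' r : RIdx d R x, RWt d R J β x r := by
  rw [ENNReal.tsum_sigma' (fun r : RIdx d R x => RWt d R J β x r)]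
  refine tsum_congr fun y => ?_
  rw [ENNReal.tsum_sigma' (fun b : Σ y' : {y' : Fin d → ℤ //
      y' ≠ y ∧ torusProj R y' = torusProj R y},
      Σ x' : {x' : Fin d → ℤ // torusProj R x' = x},
        (Σ n : ℕ, Walk n y) ×
          ((Σ n : ℕ, Walk n (y'.1 - y)) × (Σ n : ℕ, Walk n (x'.1 - y'.1))) =>
    RWt d R J β x ⟨y, b⟩)]
  rw [← ENNReal.tsum_mul_left]
  refine tsum_congr fun y' => ?_
  rw [ENNReal.tsum_sigma' (fun b : Σ x' : {x' : Fin d → ℤ // torusProj R x' = x},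
      (Σ n : ℕ, Walk n y) ×
        ((Σ n : ℕ, Walk n (y'.1 - y)) × (Σ n : ℕ, Walk n (x'.1 - y'.1))) =>
    RWt d R J β x ⟨y, ⟨y', b⟩⟩)]
  rw [← ENNReal.tsum_mul_left]
  rw [← ENNReal.tsum_mul_left]
  refine tsum_congr fun x' => ?_
  rw [saw_eq J β y, saw_eq J β (y'.1 - y), saw_eq J β (x'.1 - y'.1),
    tsum_mul_tsum, tsum_mul_tsum]
  rfl

abbrev Bad : Type := {q : GIdx d R x // ¬ Function.Injective (torusProj R ∘ q.2.1)}

lemma bad_ex (q : Bad d R x) :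
    ∃ st : ℕ × ℕ, st.1 < st.2 ∧ st.2 ≤ q.1.1 ∧
      torusProj R (ext q.1.2.1 st.1) = torusProj R (ext q.1.2.1 st.2) := by
  obtain ⟨⟨n, ω, h0, hl, hinj⟩, hbad⟩ := q
  rw [Function.not_injective_iff] at hbad
  obtain ⟨i, j, hij, hne⟩ := hbad
  rcases lt_or_gt_of_ne hne with h | h
  · exact ⟨(i.val, j.val), h, Nat.lt_succ_iff.mp j.isLt,
      by rw [ext_apply_fin, ext_apply_fin]; exact hij⟩
  · exact ⟨(j.val, i.val), h, Nat.lt_succ_iff.mp i.isLt,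
      by rw [ext_apply_fin, ext_apply_fin]; exact hij.symm⟩

noncomputable def stPair (q : Bad d R x) : ℕ × ℕ := Classical.choose (bad_ex d R x q)

lemma stPair_lt (q : Bad d R x) : (stPair d R x q).1 < (stPair d R x q).2 :=
  (Classical.choose_spec (bad_ex d R x q)).1

lemma stPair_le (q : Bad d R x) : (stPair d R x q).2 ≤ q.1.1 :=
  (Classical.choose_spec (bad_ex d R x q)).2.1

lemma stPair_proj (q : Bad d R x) :
    torusProj R (ext q.1.2.1 (stPair d R x q).1) =
      torusProj R (ext q.1.2.1 (stPair d R x q).2) :=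
  (Classical.choose_spec (bad_ex d R x q)).2.2

/-- Splitting a bad walk at the first torus self-intersection. -/
noncomputable def badMap (q : Bad d R x) : RIdx d R x :=
  ⟨ext q.1.2.1 (stPair d R x q).1,
   ⟨⟨ext q.1.2.1 (stPair d R x q).2,
      by
        intro h
        have h2 := q.1.2.2.2.2
          ((ext_eq q.1.2.1 (stPair_le d R x q)).symm.trans
            (h.trans (ext_eq q.1.2.1
              (le_of_lt (lt_of_lt_of_le (stPair_lt d R x q) (stPair_le d R x q))))))
        have h3 := congrArg Fin.val h2
        simp only at h3
        exact absurd h3 (by have := stPair_lt d R x q; omega),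
      (stPair_proj d R x q).symm⟩,
    ⟨⟨ext q.1.2.1 q.1.1,
      by
        rw [ext_eq q.1.2.1 le_rfl]
        exact q.1.2.2.2.1⟩,
     (⟨(stPair d R x q).1,
        ⟨seg q.1.2.1 0 (stPair d R x q).1,
         seg_zero _ _ _,
         by
           rw [seg_last, Nat.zero_add, ext_eq q.1.2.1 (Nat.zero_le _)]
           rw [show (⟨0, Nat.lt_succ_of_le (Nat.zero_le _)⟩ : Fin (q.1.1 + 1)) = 0 from rfl,
             q.1.2.2.1, sub_zero],
         seg_inj q.1.2.2.2.2 (by have := stPair_lt d R x q; have := stPair_le d R x q; omega)⟩⟩,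
      ⟨(stPair d R x q).2 - (stPair d R x q).1,
        ⟨seg q.1.2.1 (stPair d R x q).1 ((stPair d R x q).2 - (stPair d R x q).1),
         seg_zero _ _ _,
         by
           rw [seg_last]
           congr 2
           have := stPair_lt d R x q; omega,
         seg_inj q.1.2.2.2.2
           (by have := stPair_lt d R x q; have := stPair_le d R x q; omega)⟩⟩,
      ⟨q.1.1 - (stPair d R x q).2,
        ⟨seg q.1.2.1 (stPair d R x q).2 (q.1.1 - (stPair d R x q).2),
         seg_zero _ _ _,
         by
           rw [seg_last]
           congr 2
           have := stPair_le d R x q; omega,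
         seg_inj q.1.2.2.2.2 (by have := stPair_le d R x q; omega)⟩⟩)⟩⟩⟩

lemma badMap_wt (q : Bad d R x) :
    RWt d R J β x (badMap d R x q) = wt J β q.1.1 q.1.2.1 :=
  (wt_split J β q.1.2.1 (le_of_lt (stPair_lt d R x q)) (stPair_le d R x q)).symm

/-- Raw reconstruction of a walk from split data. -/
def raw (r : RIdx d R x) : ℕ × (ℕ → Fin d → ℤ) :=
  (r.2.2.2.1.1 + r.2.2.2.2.1.1 + r.2.2.2.2.2.1,
   fun i =>
     if h1 : i ≤ r.2.2.2.1.1 then r.2.2.2.1.2.1 ⟨i, by omega⟩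
     else if h2 : i ≤ r.2.2.2.1.1 + r.2.2.2.2.1.1 then
       r.1 + r.2.2.2.2.1.2.1 ⟨i - r.2.2.2.1.1, by omega⟩
     else if h3 : i ≤ r.2.2.2.1.1 + r.2.2.2.2.1.1 + r.2.2.2.2.2.1 then
       r.2.1.1 + r.2.2.2.2.2.2.1 ⟨i - (r.2.2.2.1.1 + r.2.2.2.2.1.1), by omega⟩
     else r.2.1.1 + r.2.2.2.2.2.2.1 (Fin.last r.2.2.2.2.2.1))

lemma raw_badMap (q : Bad d R x) :
    raw d R x (badMap d R x q) = (q.1.1, ext q.1.2.1) := by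
  obtain ⟨⟨n, ω, h0, hl, hinj⟩, hbad⟩ := q
  set Q : Bad d R x := ⟨⟨n, ω, h0, hl, hinj⟩, hbad⟩ with hQ
  set a := (stPair d R x Q).1 with ha
  set b := (stPair d R x Q).2 with hb
  have hab : a < b := stPair_lt d R x Q
  have hbn : b ≤ n := stPair_le d R x Q
  have h1 : a + (b - a) + (n - b) = n := by omega
  refine Prod.ext h1 (funext fun i => ?_)
  show (if h1 : i ≤ a then seg ω 0 a ⟨i, _⟩
    else if h2 : i ≤ a + (b - a) then ext ω a + seg ω a (b - a) ⟨i - a, _⟩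
    else if h3 : i ≤ a + (b - a) + (n - b) then
      ext ω b + seg ω b (n - b) ⟨i - (a + (b - a)), _⟩
    else ext ω b + seg ω b (n - b) (Fin.last (n - b))) = ext ω i
  have hba : a + (b - a) = b := by omega
  split_ifs with hc1 hc2 hc3
  · show ext ω (0 + i) - ext ω 0 = ext ω i
    rw [Nat.zero_add, ext_eq ω (Nat.zero_le _),
      show (⟨0, Nat.lt_succ_of_le (Nat.zero_le _)⟩ : Fin (n + 1)) = 0 from rfl, h0, sub_zero]
  · show ext ω a + (ext ω (a + (i - a)) - ext ω a) = ext ω i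
    rw [show a + (i - a) = i by omega]
    abel
  · show ext ω b + (ext ω (b + (i - (a + (b - a)))) - ext ω b) = ext ω i
    rw [show b + (i - (a + (b - a))) = i by omega]
    abel
  · show ext ω b + (ext ω (b + (n - b)) - ext ω b) = ext ω i
    rw [show b + (n - b) = n by omega, ext_of_le ω (by omega : n ≤ i)]
    abel

lemma badMap_inj : Function.Injective (badMap d R x) := by
  intro q1 q2 h
  have hr := (raw_badMap d R x q1).symm.trans
    ((congrArg (raw d R x) h).trans (raw_badMap d R x q2))
  obtain ⟨⟨n1, ω1, hω1⟩, hb1⟩ := q1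
  obtain ⟨⟨n2, ω2, hω2⟩, hb2⟩ := q2
  have hn : n1 = n2 := congrArg Prod.fst hr
  subst hn
  have hw := congrArg Prod.snd hr
  have hω : ω1 = ω2 := funext fun i => by
    rw [← ext_apply_fin ω1 i, ← ext_apply_fin ω2 i]
    exact congrFun hw i.val
  subst hω
  rfl

lemma bad_le :
    (∑' q : Bad d R x, wt J β q.1.1 q.1.2.1) ≤
      ∑' y : Fin d → ℤ,
        sawTwoPoint J β y *
          ∑' y' : {y' : Fin d → ℤ // y' ≠ y ∧ torusProj R y' = torusProj R y},
            sawTwoPoint J β (y'.1 - y) *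
              ∑' x' : {x' : Fin d → ℤ // torusProj R x' = x},
                sawTwoPoint J β (x'.1 - y'.1) := by
  rw [rhs_eq]
  have h1 : (∑' q : Bad d R x, wt J β q.1.1 q.1.2.1) =
      ∑' q : Bad d R x, RWt d R J β x (badMap d R x q) :=
    tsum_congr fun q => (badMap_wt d R J β x q).symm
  rw [h1]
  exact ENNReal.tsum_comp_le_tsum_of_injective (badMap_inj d R x) _

end Main

end UnwrapAux

open UnwrapAux in
/-- Diagrammatic bound for the difference between the unwrapped two-point function
`Γ_{R,β}(x) = ∑_{x' : π(x')=x} G_β(x')` and the torus two-point function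
`G_{R,β}(x)` (defined with the periodised kernel `J̄_R`):
`Γ_{R,β}(x) - G_{R,β}(x) ≤
  ∑_y G_β(y) ∑_{y'≠y, π(y')=π(y)} G_β(y'-y) ∑_{x', π(x')=x} G_β(x'-y')`. -/
theorem unwrapped_minus_torus_saw_bound (d R : ℕ) (hd : 1 ≤ d) (hR : 1 ≤ R)
    (J : (Fin d → ℤ) → ℝ≥0) (hJ0 : J 0 = 0) (hJsym : ∀ y, J (-y) = J y)
    (β : ℝ≥0) (x : Fin d → ZMod R) :
    (∑' x' : {x' : Fin d → ℤ // torusProj R x' = x},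
        sawTwoPoint (fun z : Fin d → ℤ => (J z : ℝ≥0∞)) β x'.1) -
      sawTwoPoint
        (fun y : Fin d → ZMod R =>
          ∑' z : {z : Fin d → ℤ // torusProj R z = y}, (J z.1 : ℝ≥0∞)) β x ≤
    ∑' y : Fin d → ℤ,
      sawTwoPoint (fun z : Fin d → ℤ => (J z : ℝ≥0∞)) β y *
        ∑' y' : {y' : Fin d → ℤ // y' ≠ y ∧ torusProj R y' = torusProj R y},
          sawTwoPoint (fun z : Fin d → ℤ => (J z : ℝ≥0∞)) β (y'.1 - y) *
            ∑' x' : {x' : Fin d → ℤ // torusProj R x' = x},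
              sawTwoPoint (fun z : Fin d → ℤ => (J z : ℝ≥0∞)) β (x'.1 - y'.1) := by
  set Jc : (Fin d → ℤ) → ℝ≥0∞ := fun z => (J z : ℝ≥0∞) with hJc
  rw [gamma_eq d R Jc β x]
  refine tsub_le_iff_right.mpr ?_
  rw [← Summable.tsum_add_tsum_compl
    (s := {q : GIdx d R x | Function.Injective (torusProj R ∘ q.2.1)})
    (f := fun q : GIdx d R x => wt Jc β q.1 q.2.1) ENNReal.summable ENNReal.summable]
  refine le_trans (add_le_add (good_le d R Jc β x) (bad_le d R Jc β x)) ?_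
  rw [add_comm]
end
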